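/- The path algebra of a linearly oriented A_n quiver has exactly n(n+1)/2 indecomposable representations up to isomorphism, namely the interval modules M_{ij} for 0 ≤ i < j ≤ n. -/

import Mathlib

open Function

structure LinRep (K : Type) [Field K] where
  V : ℕ → Type
  [instAdd : ∀ v, AddCommGroup (V v)]
  [instMod : ∀ v, Module K (V v)]
  map : ∀ v : ℕ, V (v + 1) →ₗ[K] V v

attribute [instance] LinRep.instAdd LinRep.instMod

structure LinRepHom {K : Type} [Field K] (A B : LinRep K) where
  app : ∀ v, A.V v →ₗ[K] B.V v
  comm : ∀ v, (app v).comp (A.map v) = (B.map v).comp (app (v + 1))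

def intervalSub (K : Type) [Field K] (i j v : ℕ) : Submodule K K :=
  if i < v ∧ v ≤ j then ⊤ else ⊥

def intervalMap (K : Type) [Field K] (i j v : ℕ) :
    ↥(intervalSub K i j (v + 1)) →ₗ[K] ↥(intervalSub K i j v) :=
  if h : i < v ∧ v ≤ j then
    { toFun := fun x => ⟨(x : K), by simp [intervalSub, h]⟩
      map_add' := by intro x y; rfl
      map_smul' := by intro c x; rfl }
  else 0

def IntervalM (K : Type) [Field K] (i j : ℕ) : LinRep K where
  V := fun v => ↥(intervalSub K i j v)
  map := fun v => intervalMap K i j v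

def HomZero {K : Type} [Field K] (A B : LinRep K) : Prop :=
  ∀ f : LinRepHom A B, ∀ v, f.app v = 0

def Ext1Zero {K : Type} [Field K] (X A : LinRep K) : Prop :=
  ∀ (E : LinRep K) (ι : LinRepHom A E) (π : LinRepHom E X),
    (∀ v, Function.Injective (ι.app v)) →
    (∀ v, Function.Surjective (π.app v)) →
    (∀ v, LinearMap.range (ι.app v) = LinearMap.ker (π.app v)) →
    ∃ s : LinRepHom X E, ∀ v, (π.app v).comp (s.app v) = LinearMap.id

def IsoRep {K : Type} [Field K] (A B : LinRep K) : Prop :=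
  ∃ f : LinRepHom A B, ∀ v, Function.Bijective (f.app v)

def DSum {K : Type} [Field K] (A B : LinRep K) : LinRep K where
  V := fun v => A.V v × B.V v
  map := fun v => (A.map v).prodMap (B.map v)

def IndecomposableRep {K : Type} [Field K] (A : LinRep K) : Prop :=
  (∃ v, ∃ x : A.V v, x ≠ 0) ∧
    ∀ B C : LinRep K, IsoRep A (DSum B C) →
      (∀ v, ∀ x : B.V v, x = 0) ∨ (∀ v, ∀ x : C.V v, x = 0)

/-- `A` is a module over the path algebra of the linearly oriented `A_n` quiver:
it is supported on the vertices `1, …, n`. -/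
def Supported {K : Type} [Field K] (A : LinRep K) (n : ℕ) : Prop :=
  ∀ v, (v = 0 ∨ n < v) → ∀ x : A.V v, x = 0

def FinDimRep {K : Type} [Field K] (A : LinRep K) : Prop :=
  ∀ v, FiniteDimensional K (A.V v)


noncomputable def chain {K : Type} [Field K] (A : LinRep K) (j : ℕ) (x : A.V j) : ∀ v, A.V v :=
  fun v =>
    if h : v < j then A.map v (chain A j x (v + 1))
    else if h2 : j = v then h2 ▸ x else 0
termination_by v => j - v
decreasing_by omega

lemma chain_self {K : Type} [Field K] (A : LinRep K) (j : ℕ) (x : A.V j) :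
    chain A j x j = x := by
  rw [chain]; simp

lemma chain_lt {K : Type} [Field K] (A : LinRep K) (j : ℕ) (x : A.V j) {v : ℕ} (h : v < j) :
    chain A j x v = A.map v (chain A j x (v + 1)) := by
  rw [chain]; simp [h]

lemma chain_gt {K : Type} [Field K] (A : LinRep K) (j : ℕ) (x : A.V j) {v : ℕ} (h : j < v) :
    chain A j x v = 0 := by
  rw [chain]; rw [dif_neg (by omega), dif_neg (by omega)]

noncomputable def lamSeq {K : Type} [Field K] (A : LinRep K) (i : ℕ)
    (lam0 : A.V (i + 1) →ₗ[K] K) : ∀ v, A.V v →ₗ[K] K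
  | 0 => 0
  | v + 1 => if h : i = v then h ▸ lam0 else (lamSeq A i lam0 v).comp (A.map v)

lemma lamSeq_at {K : Type} [Field K] (A : LinRep K) (i : ℕ) (lam0 : A.V (i + 1) →ₗ[K] K) :
    lamSeq A i lam0 (i + 1) = lam0 := by
  rw [lamSeq]; simp

lemma lamSeq_succ {K : Type} [Field K] (A : LinRep K) (i : ℕ) (lam0 : A.V (i + 1) →ₗ[K] K)
    {v : ℕ} (h : i ≠ v) :
    lamSeq A i lam0 (v + 1) = (lamSeq A i lam0 v).comp (A.map v) := by
  rw [lamSeq]; simp [h]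

section Interval
variable {K : Type} [Field K]

lemma intM_zero {i j v : ℕ} (h : ¬(i < v ∧ v ≤ j)) (x : (IntervalM K i j).V v) : x = 0 := by
  have hx := x.2
  simp only [intervalSub, if_neg h, Submodule.mem_bot] at hx
  exact Subtype.ext hx

lemma intM_one_mem {i j v : ℕ} (h : i < v ∧ v ≤ j) : (1 : K) ∈ intervalSub K i j v := by
  simp [intervalSub, h]

lemma intM_ne {i j v : ℕ} (h : i < v ∧ v ≤ j) :
    (⟨(1 : K), intM_one_mem h⟩ : (IntervalM K i j).V v) ≠ 0 := by
  intro hc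
  have : (1 : K) = 0 := congrArg Subtype.val hc
  exact one_ne_zero this

lemma intM_exists_iff {i j v : ℕ} :
    (∃ x : (IntervalM K i j).V v, x ≠ 0) ↔ (i < v ∧ v ≤ j) := by
  constructor
  · rintro ⟨x, hx⟩
    by_contra h
    exact hx (intM_zero h x)
  · intro h
    exact ⟨_, intM_ne h⟩

lemma intervalMap_coe {i j v : ℕ} (x : ↥(intervalSub K i j (v + 1))) :
    (intervalMap K i j v x).1 = if i < v ∧ v ≤ j then x.1 else 0 := by
  by_cases h : i < v ∧ v ≤ j
  · rw [intervalMap, dif_pos h, if_pos h]; rfl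
  · rw [intervalMap, dif_neg h, if_neg h]
    rfl

lemma intervalMap_inj {i j v : ℕ} (h : i < v ∧ v ≤ j) :
    Function.Injective (intervalMap K i j v) := by
  intro a b hab
  have : (intervalMap K i j v a).1 = (intervalMap K i j v b).1 := congrArg Subtype.val hab
  rw [intervalMap_coe, intervalMap_coe, if_pos h, if_pos h] at this
  exact Subtype.ext this

end Interval

section Parts12
variable {K : Type} [Field K]

lemma not_both_nonzero {V B C : Type} [AddCommGroup V] [Module K V]
    [AddCommGroup B] [Module K B] [AddCommGroup C] [Module K C]
    (f : V →ₗ[K] B × C) (hsurj : Function.Surjective f) (e : V)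
    (hspan : ∀ x : V, ∃ a : K, x = a • e)
    {b : B} (hb : b ≠ 0) {c : C} (hc : c ≠ 0) : False := by
  obtain ⟨p, hp⟩ := hsurj (b, 0)
  obtain ⟨q, hq⟩ := hsurj (0, c)
  obtain ⟨a, ha⟩ := hspan p
  obtain ⟨a', ha'⟩ := hspan q
  have key : a' • p = a • q := by rw [ha, ha', smul_smul, smul_smul, mul_comm]
  have key2 : (a' • b, (0 : C)) = ((0 : B), a • c) := by
    have := congrArg f key
    rw [map_smul, map_smul, hp, hq] at this
    simpa [Prod.smul_def] using this
  have hac : a • c = 0 := (Prod.ext_iff.mp key2).2.symm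
  have ha0 : a = 0 := by
    rcases smul_eq_zero.mp hac with h | h
    · exact h
    · exact absurd h hc
  rw [ha0, zero_smul] at ha
  rw [ha, map_zero] at hp
  have : (0 : B) = b := by simpa using congrArg Prod.fst hp
  exact hb this.symm

lemma transfer_zero {A B C : LinRep K} (f : LinRepHom A (DSum B C)) {v : ℕ}
    (hsurj : Function.Surjective (f.app v)) (hA : ∀ x : A.V v, x = 0) :
    (∀ y : B.V v, y = 0) ∧ (∀ z : C.V v, z = 0) := by
  constructor
  · intro y
    obtain ⟨p, hp⟩ := hsurj (y, 0)
    rw [hA p, map_zero] at hp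
    have : (0 : B.V v) = y := congrArg Prod.fst hp
    exact this.symm
  · intro z
    obtain ⟨p, hp⟩ := hsurj (0, z)
    rw [hA p, map_zero] at hp
    have : (0 : C.V v) = z := congrArg Prod.snd hp
    exact this.symm

lemma descend_nonzero (B : LinRep K) (i j : ℕ)
    (hinj : ∀ v, i < v → v < j → Function.Injective (B.map v)) :
    ∀ v, i + 1 ≤ v → v ≤ j → (∃ y : B.V v, y ≠ 0) → ∃ y : B.V (i + 1), y ≠ 0 := by
  intro v hv
  induction v, hv using Nat.le_induction with
  | base => intro _ h; exact h
  | succ m hm ih =>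
    intro hmj ⟨y, hy⟩
    refine ih (by omega) ⟨B.map m y, fun hc => hy ?_⟩
    have := hinj m (by omega) (by omega)
    exact this (by rw [hc, map_zero])

lemma interval_indecomposable {i j n : ℕ} (hij : i < j) (hjn : j ≤ n) :
    IndecomposableRep (IntervalM K i j) := by
  constructor
  · exact ⟨i + 1, _, intM_ne ⟨Nat.lt_succ_self i, hij⟩⟩
  · intro B C ⟨f, hf⟩
    by_contra hcon
    push_neg at hcon
    obtain ⟨⟨vb, yb, hyb⟩, ⟨vc, zc, hzc⟩⟩ := hcon
    -- supports are in the interval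
    have hcb : i < vb ∧ vb ≤ j := by
      by_contra h
      exact hyb ((transfer_zero f (hf vb).2 (intM_zero h)).1 yb)
    have hcc : i < vc ∧ vc ≤ j := by
      by_contra h
      exact hzc ((transfer_zero f (hf vc).2 (intM_zero h)).2 zc)
    -- DSum maps injective on the interval
    have hinj : ∀ v, i < v → v < j → Function.Injective ((DSum B C).map v) := by
      intro v h1 h2 z₁ z₂ hz
      obtain ⟨m₁, hm₁⟩ := (hf (v + 1)).2 z₁
      obtain ⟨m₂, hm₂⟩ := (hf (v + 1)).2 z₂
      have hcomm := f.comm v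
      have e₁ : f.app v ((IntervalM K i j).map v m₁) = (DSum B C).map v z₁ := by
        rw [← hm₁]; exact congrFun (congrArg (fun g => g.toFun) hcomm) m₁
      have e₂ : f.app v ((IntervalM K i j).map v m₂) = (DSum B C).map v z₂ := by
        rw [← hm₂]; exact congrFun (congrArg (fun g => g.toFun) hcomm) m₂
      have : (IntervalM K i j).map v m₁ = (IntervalM K i j).map v m₂ :=
        (hf v).1 (by rw [e₁, e₂, hz])
      have : m₁ = m₂ := intervalMap_inj ⟨h1, le_of_lt h2⟩ this
      rw [← hm₁, ← hm₂, this]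
    have hinjB : ∀ v, i < v → v < j → Function.Injective (B.map v) := by
      intro v h1 h2 b₁ b₂ hb
      have : ((DSum B C).map v) (b₁, 0) = ((DSum B C).map v) (b₂, 0) := by
        show (B.map v b₁, C.map v (0 : C.V (v+1))) = (B.map v b₂, C.map v 0)
        rw [map_zero, hb]
      exact (Prod.ext_iff.mp (hinj v h1 h2 this)).1
    have hinjC : ∀ v, i < v → v < j → Function.Injective (C.map v) := by
      intro v h1 h2 c₁ c₂ hc
      have : ((DSum B C).map v) (0, c₁) = ((DSum B C).map v) (0, c₂) := by
        show (B.map v (0 : B.V (v+1)), C.map v c₁) = (B.map v 0, C.map v c₂)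
        rw [map_zero, hc]
      exact (Prod.ext_iff.mp (hinj v h1 h2 this)).2
    obtain ⟨b, hb⟩ := descend_nonzero B i j hinjB vb hcb.1 hcb.2 ⟨yb, hyb⟩
    obtain ⟨c, hc⟩ := descend_nonzero C i j hinjC vc hcc.1 hcc.2 ⟨zc, hzc⟩
    have hcond : i < i + 1 ∧ i + 1 ≤ j := ⟨Nat.lt_succ_self i, hij⟩
    refine not_both_nonzero (f.app (i + 1)) (hf (i + 1)).2
      ⟨(1 : K), intM_one_mem hcond⟩ ?_ hb hc
    intro x
    refine ⟨x.1, Subtype.ext ?_⟩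
    exact (mul_one (x.1 : K)).symm

end Parts12

section Part2
variable {K : Type} [Field K]

lemma isoRep_refl (A : LinRep K) : IsoRep A A :=
  ⟨⟨fun _ => LinearMap.id, fun v => by ext x; rfl⟩, fun v => Function.bijective_id⟩

lemma interval_iso_iff {i j k ℓ n : ℕ} (hij : i < j) (hjn : j ≤ n) (hkl : k < ℓ)
    (hln : ℓ ≤ n) :
    IsoRep (IntervalM K i j) (IntervalM K k ℓ) ↔ (i = k ∧ j = ℓ) := by
  constructor
  · rintro ⟨f, hf⟩
    have key : ∀ v, (i < v ∧ v ≤ j) ↔ (k < v ∧ v ≤ ℓ) := by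
      intro v
      rw [← intM_exists_iff (K := K), ← intM_exists_iff (K := K)]
      constructor
      · rintro ⟨x, hx⟩
        refine ⟨f.app v x, fun hc => hx ?_⟩
        exact (hf v).1 (by rw [hc, map_zero])
      · rintro ⟨y, hy⟩
        obtain ⟨x, hx⟩ := (hf v).2 y
        exact ⟨x, fun hc => hy (by rw [← hx, hc, map_zero])⟩
    have h1 := (key j).mp ⟨hij, le_refl j⟩
    have h2 := (key ℓ).mpr ⟨hkl, le_refl ℓ⟩
    have h3 := (key (i + 1)).mp ⟨Nat.lt_succ_self i, hij⟩
    have h4 := (key (k + 1)).mpr ⟨Nat.lt_succ_self k, hkl⟩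
    omega
  · rintro ⟨rfl, rfl⟩
    exact isoRep_refl _

end Part2

section Part4

lemma count_intervals (n : ℕ) :
    Nat.card {p : ℕ × ℕ // p.1 < p.2 ∧ p.2 ≤ n} = n * (n + 1) / 2 := by
  have e : {p : ℕ × ℕ // p.1 < p.2 ∧ p.2 ≤ n} ≃ (Σ j : Fin (n + 1), Fin j.val) :=
    { toFun := fun p => ⟨⟨p.1.2, by omega⟩, ⟨p.1.1, p.2.1⟩⟩
      invFun := fun q => ⟨(q.2.val, q.1.val), ⟨q.2.isLt, by omega⟩⟩
      left_inv := fun p => by ext <;> rfl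
      right_inv := fun q => by rfl }
  rw [Nat.card_congr e, Nat.card_eq_fintype_card, Fintype.card_sigma]
  simp only [Fintype.card_fin]
  rw [Fin.sum_univ_eq_sum_range (fun r => r) (n + 1), Finset.sum_range_id]
  rw [Nat.add_sub_cancel, Nat.mul_comm]

end Part4

lemma exists_functional {K V : Type} [Field K] [AddCommGroup V] [Module K V] {y : V} (hy : y ≠ 0) :
    ∃ φ : V →ₗ[K] K, φ y = 1 := by
  obtain ⟨q, hq⟩ := Submodule.exists_isCompl (K ∙ y)
  refine ⟨((LinearEquiv.toSpanNonzeroSingleton K V y hy).symm.toLinearMap).comp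
    (Submodule.linearProjOfIsCompl _ q hq), ?_⟩
  have h1 : (Submodule.linearProjOfIsCompl _ q hq) y = ⟨y, Submodule.mem_span_singleton_self y⟩ :=
    Submodule.linearProjOfIsCompl_apply_left hq ⟨y, Submodule.mem_span_singleton_self y⟩
  have h2 : (LinearEquiv.toSpanNonzeroSingleton K V y hy) 1 = ⟨y, Submodule.mem_span_singleton_self y⟩ := by
    apply Subtype.ext
    simp [LinearEquiv.toSpanNonzeroSingleton_apply]
  rw [LinearMap.comp_apply, h1, ← h2]
  exact (LinearEquiv.toSpanNonzeroSingleton K V y hy).symm_apply_apply 1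

section Part3
variable {K : Type} [Field K]

noncomputable def rApp (A : LinRep K) (i j : ℕ) (lam : ∀ v, A.V v →ₗ[K] K) (v : ℕ) :
    A.V v →ₗ[K] ↥(intervalSub K i j v) :=
  if h : i < v ∧ v ≤ j then
    LinearMap.codRestrict _ (lam v) (fun _ => by simp [intervalSub, h])
  else 0

lemma rApp_coe (A : LinRep K) (i j : ℕ) (lam : ∀ v, A.V v →ₗ[K] K) (v : ℕ) (u : A.V v) :
    (rApp A i j lam v u).1 = if i < v ∧ v ≤ j then lam v u else 0 := by
  by_cases h : i < v ∧ v ≤ j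
  · rw [rApp, dif_pos h, if_pos h]; rfl
  · rw [rApp, dif_neg h, if_neg h]; rfl

noncomputable def sApp (A : LinRep K) (i j : ℕ) (c : ∀ v, A.V v) (v : ℕ) :
    ↥(intervalSub K i j v) →ₗ[K] A.V v :=
  (LinearMap.toSpanSingleton K (A.V v) (if i < v ∧ v ≤ j then c v else 0)).comp
    (intervalSub K i j v).subtype

lemma sApp_apply (A : LinRep K) (i j : ℕ) (c : ∀ v, A.V v) (v : ℕ)
    (t : ↥(intervalSub K i j v)) :
    sApp A i j c v t = t.1 • (if i < v ∧ v ≤ j then c v else 0) := rfl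

lemma part3 (n : ℕ) (A : LinRep K) (hsupp : Supported A n) (hind : IndecomposableRep A) :
    ∃ i j : ℕ, i < j ∧ j ≤ n ∧ IsoRep A (IntervalM K i j) := by
  classical
  obtain ⟨v₀, x₀, hx₀⟩ := hind.1
  have hv₀ : ¬(v₀ = 0 ∨ n < v₀) := fun h => hx₀ (hsupp v₀ h x₀)
  set P : ℕ → Prop := fun v => ∃ x : A.V v, x ≠ 0 with hP
  set j : ℕ := Nat.findGreatest P n with hjdef
  have hjn : j ≤ n := Nat.findGreatest_le n
  have hj1 : P j := Nat.findGreatest_spec (m := v₀) (by omega) ⟨x₀, hx₀⟩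
  have htop : ∀ w, j < w → ∀ y : A.V w, y = 0 := by
    intro w hw y
    by_cases hwn : w ≤ n
    · by_contra hy
      exact Nat.findGreatest_is_greatest hw hwn ⟨y, hy⟩
    · exact hsupp w (Or.inr (by omega)) y
  obtain ⟨x, hx⟩ := hj1
  set c : ∀ v, A.V v := chain A j x with hcdef
  have hcj : c j = x := chain_self A j x
  have hc0 : c 0 = 0 := hsupp 0 (Or.inl rfl) _
  have hex : ∃ v, c v ≠ 0 := ⟨j, by rw [hcj]; exact hx⟩
  set m : ℕ := Nat.find hex with hmdef
  have hm1 : c m ≠ 0 := Nat.find_spec hex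
  have hmin : ∀ v, v < m → c v = 0 := by
    intro v hv
    by_contra hc
    exact Nat.find_min hex hv hc
  have hm0 : 1 ≤ m := by
    rcases Nat.eq_zero_or_pos m with h | h
    · exact absurd (h ▸ hc0) hm1
    · exact h
  have hmj : m ≤ j := by
    by_contra h
    exact hm1 (chain_gt A j x (by omega))
  set i : ℕ := m - 1 with hidef
  have him : i + 1 = m := by omega
  have hij : i < j := by omega
  have hci : c i = 0 := hmin i (by omega)
  -- downward propagation of vanishing
  have hdown : ∀ d u, u + d ≤ j → c (u + d) = 0 → c u = 0 := by
    intro d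
    induction d with
    | zero => intro u _ h; exact h
    | succ e ih =>
      intro u hle h0
      refine ih u (by omega) ?_
      have h0' : c (u + e + 1) = 0 := h0
      have : c (u + e) = A.map (u + e) (c (u + e + 1)) := chain_lt A j x (by omega)
      rw [this, h0', map_zero]
  have hcne : ∀ v, i < v → v ≤ j → c v ≠ 0 := by
    intro v h1 h2 hv0
    exact hm1 (hdown (v - m) m (by omega) (by rw [show m + (v - m) = v from by omega]; exact hv0))
  obtain ⟨φ, hφ⟩ := exists_functional (K := K) (hcne (i + 1) (by omega) (by omega))
  set lam : ∀ v, A.V v →ₗ[K] K := lamSeq A i φ with hlamdef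
  have hlam_at : lam (i + 1) = φ := lamSeq_at A i φ
  have hlam_succ : ∀ v, i ≠ v → lam (v + 1) = (lam v).comp (A.map v) :=
    fun v h => lamSeq_succ A i φ h
  have hlam1 : ∀ v, i + 1 ≤ v → v ≤ j → lam v (c v) = 1 := by
    intro v hv
    induction v, hv using Nat.le_induction with
    | base => intro _; rw [hlam_at]; exact hφ
    | succ w hw ih =>
      intro hwj
      rw [hlam_succ w (by omega), LinearMap.comp_apply,
        ← chain_lt A j x (show w < j from by omega)]
      exact ih (by omega)
  -- the retraction r : A → M
  have hrcomm : ∀ v, (rApp A i j lam v).comp (A.map v)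
      = (intervalMap K i j v).comp (rApp A i j lam (v + 1)) := by
    intro v
    refine LinearMap.ext fun u => Subtype.ext ?_
    rw [LinearMap.comp_apply, LinearMap.comp_apply, rApp_coe, intervalMap_coe]
    by_cases h : i < v ∧ v ≤ j
    · rw [if_pos h, if_pos h, rApp_coe]
      by_cases h2 : v < j
      · rw [if_pos ⟨by omega, by omega⟩, hlam_succ v (by omega)]; rfl
      · have hvj : v = j := by omega
        rw [if_neg (by omega)]
        have hu : u = 0 := htop (v + 1) (by omega) u
        rw [hu, map_zero, map_zero]
    · rw [if_neg h, if_neg h]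
  -- the section s : M → A
  have hscomm : ∀ v, (sApp A i j c v).comp (intervalMap K i j v)
      = (A.map v).comp (sApp A i j c (v + 1)) := by
    intro v
    refine LinearMap.ext fun t => ?_
    rw [LinearMap.comp_apply, LinearMap.comp_apply, sApp_apply, sApp_apply, intervalMap_coe,
      map_smul]
    by_cases h : i < v ∧ v ≤ j
    · rw [if_pos h, if_pos h]
      by_cases h2 : v < j
      · rw [if_pos ⟨by omega, by omega⟩, ← chain_lt A j x h2]
      · have hvj : v = j := by omega
        have ht : t.1 = 0 := by
          have := t.2
          simp only [intervalSub, if_neg (show ¬(i < v + 1 ∧ v + 1 ≤ j) from by omega),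
            Submodule.mem_bot] at this
          exact this
        rw [ht, zero_smul, zero_smul]
    · rw [if_neg h, zero_smul]
      by_cases h2 : i < v + 1 ∧ v + 1 ≤ j
      · have hvi : v = i := by omega
        have hcv : chain A j x v = 0 := by rw [hvi]; exact hci
        rw [if_pos h2, ← chain_lt A j x (show v < j from by omega), hcv, smul_zero]
      · rw [if_neg h2, map_zero, smul_zero]
  -- r ∘ s = id
  have hrs : ∀ v (t : ↥(intervalSub K i j v)),
      rApp A i j lam v (sApp A i j c v t) = t := by
    intro v t
    refine Subtype.ext ?_
    rw [rApp_coe, sApp_apply]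
    by_cases h : i < v ∧ v ≤ j
    · rw [if_pos h, if_pos h, map_smul, hlam1 v (by omega) h.2, smul_eq_mul, mul_one]
    · rw [if_neg h]
      have := t.2
      simp only [intervalSub, if_neg h, Submodule.mem_bot] at this
      exact this.symm
  -- the complement representation
  have hker : ∀ v u, u ∈ LinearMap.ker (rApp A i j lam (v + 1)) →
      A.map v u ∈ LinearMap.ker (rApp A i j lam v) := by
    intro v u hu
    have := congrArg (fun g => g u) (hrcomm v)
    simp only [LinearMap.comp_apply] at this
    rw [LinearMap.mem_ker] at hu ⊢
    rw [this, hu, map_zero]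
  set C : LinRep K :=
    { V := fun v => ↥(LinearMap.ker (rApp A i j lam v))
      map := fun v => ((A.map v).restrict (hker v)) } with hCdef
  -- the decomposition map
  have hkerc : ∀ v (u : A.V v),
      u - sApp A i j c v (rApp A i j lam v u) ∈ LinearMap.ker (rApp A i j lam v) := by
    intro v u
    rw [LinearMap.mem_ker, map_sub, hrs, sub_self]
  set ψ : ∀ v, A.V v →ₗ[K] ↥(LinearMap.ker (rApp A i j lam v)) := fun v =>
    LinearMap.codRestrict _ (LinearMap.id - (sApp A i j c v).comp (rApp A i j lam v))
      (fun u => hkerc v u) with hψdef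
  set Φ : ∀ v, A.V v →ₗ[K] (↥(intervalSub K i j v) × ↥(LinearMap.ker (rApp A i j lam v))) :=
    fun v => LinearMap.prod (rApp A i j lam v) (ψ v) with hΦdef
  have hΦcomm : ∀ v, (Φ v).comp (A.map v)
      = ((DSum (IntervalM K i j) C).map v).comp (Φ (v + 1)) := by
    intro v
    refine LinearMap.ext fun u => Prod.ext ?_ (Subtype.ext ?_)
    · exact congrArg (fun g => g u) (hrcomm v)
    · show A.map v u - sApp A i j c v (rApp A i j lam v (A.map v u))
        = A.map v (u - sApp A i j c (v + 1) (rApp A i j lam (v + 1) u))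
      rw [map_sub]
      congr 1
      have h1 : A.map v (sApp A i j c (v + 1) (rApp A i j lam (v + 1) u))
          = sApp A i j c v (intervalMap K i j v (rApp A i j lam (v + 1) u)) :=
        (congrArg (fun g => g (rApp A i j lam (v + 1) u)) (hscomm v)).symm
      have h2 : intervalMap K i j v (rApp A i j lam (v + 1) u)
          = rApp A i j lam v (A.map v u) :=
        (congrArg (fun g => g u) (hrcomm v)).symm
      rw [h1, h2]
  have hΦbij : ∀ v, Function.Bijective (Φ v) := by
    intro v
    constructor
    · intro u₁ u₂ h
      have h1 : rApp A i j lam v u₁ = rApp A i j lam v u₂ := congrArg Prod.fst h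
      have h2 : u₁ - sApp A i j c v (rApp A i j lam v u₁)
          = u₂ - sApp A i j c v (rApp A i j lam v u₂) :=
        congrArg (fun z => (Prod.snd z).1) h
      rw [h1] at h2
      exact sub_left_injective h2
    · rintro ⟨t, ⟨w, hw⟩⟩
      refine ⟨sApp A i j c v t + w, ?_⟩
      have hrw : rApp A i j lam v w = 0 := hw
      refine Prod.ext ?_ (Subtype.ext ?_)
      · show rApp A i j lam v (sApp A i j c v t + w) = t
        rw [map_add, hrs, hrw, add_zero]
      · show (sApp A i j c v t + w) - sApp A i j c v (rApp A i j lam v (sApp A i j c v t + w)) = w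
        rw [map_add, hrs, hrw, add_zero, add_sub_cancel_left]
  rcases hind.2 (IntervalM K i j) C ⟨⟨Φ, hΦcomm⟩, hΦbij⟩ with hB | hC
  · exact absurd (hB (i + 1) ⟨(1 : K), intM_one_mem ⟨Nat.lt_succ_self i, by omega⟩⟩)
      (intM_ne ⟨Nat.lt_succ_self i, by omega⟩)
  · refine ⟨i, j, hij, hjn, ⟨⟨rApp A i j lam, hrcomm⟩, fun v => ⟨?_, ?_⟩⟩⟩
    · intro u₁ u₂ h
      have h' : rApp A i j lam v u₁ = rApp A i j lam v u₂ := h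
      have hz : u₁ - u₂ ∈ LinearMap.ker (rApp A i j lam v) := by
        rw [LinearMap.mem_ker, map_sub, h', sub_self]
      have := congrArg Subtype.val (hC v ⟨u₁ - u₂, hz⟩)
      exact sub_eq_zero.mp this
    · intro t
      exact ⟨sApp A i j c v t, hrs v t⟩
end Part3

/-- The path algebra of a linearly oriented `A_n` quiver has exactly
`n(n+1)/2` indecomposable representations up to isomorphism, namely the interval modules
`M_{ij}` for `0 ≤ i < j ≤ n`. -/
theorem linear_An_indecomposables (K : Type) [Field K] (n : ℕ) :
    (∀ i j : ℕ, i < j → j ≤ n →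
        IndecomposableRep (IntervalM K i j) ∧ Supported (IntervalM K i j) n ∧
          FinDimRep (IntervalM K i j)) ∧
    (∀ i j k ℓ : ℕ, i < j → j ≤ n → k < ℓ → ℓ ≤ n →
        (IsoRep (IntervalM K i j) (IntervalM K k ℓ) ↔ (i = k ∧ j = ℓ))) ∧
    (∀ A : LinRep K, Supported A n → FinDimRep A → IndecomposableRep A →
        ∃ i j : ℕ, i < j ∧ j ≤ n ∧ IsoRep A (IntervalM K i j)) ∧
    Nat.card {p : ℕ × ℕ // p.1 < p.2 ∧ p.2 ≤ n} = n * (n + 1) / 2 := by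
  refine ⟨?_, ?_, ?_, count_intervals n⟩
  · intro i j hij hjn
    refine ⟨interval_indecomposable hij hjn, ?_, ?_⟩
    · intro v hv y
      exact intM_zero (by omega) y
    · intro v
      exact inferInstanceAs (FiniteDimensional K ↥(intervalSub K i j v))
  · intro i j k ℓ hij hjn hkl hln
    exact interval_iso_iff hij hjn hkl hln
  · intro A hs _ hi
    exact part3 n A hs hi
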